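/- arXiv:2304.09709 — 4 statements merged into one kernel-verified Lean document; each statement's English description precedes it below -/
import Mathlib

section
/- (Higman-type theorem) If ⪯ is a wqo on A, then the order ≪ on A* defined by: for s = (a_i)_{i<k} and t = (b_i)_{i<n}, t ≪ s iff either n = k = 0, or n ≥ k > 0 and a_k ⪯ b_n and s ⊴ t' for some subsequence t' of t (where s ⊴ t' means s and t' have equal length and entries are pairwise ⪯-related), is a wqo on A*. -/
/-!
Since `r` need not be transitive, the argument goes through the weaker property
`WellQuasiOrdered r` (every sequence has an `r`-related pair `i < j`), which Ramsey's theorem for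
pairs upgrades to infinite chains. Higman's minimal bad sequence argument, run with chains of `r`
among the heads, gives that property for `List.SublistForall₂ r`. On nonempty lists `≪` contains
the intersection of comparison of lengths, `r` between last entries and `List.SublistForall₂ r`,
and an intersection of relations with infinite chains in every sequence again has them; the empty
lists are pairwise `≪`-related.
-/

/-- A relation `r` is a well-quasi-order: every infinite sequence contains an
infinite subsequence which is an `r`-chain. -/
def IsWqo {A : Type*} (r : A → A → Prop) : Prop :=
  ∀ f : ℕ → A, ∃ g : ℕ → ℕ, StrictMono g ∧ ∀ i j : ℕ, i < j → r (f (g i)) (f (g j))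

/-- The order `≪` of the paper: `Ll r t s` says `t ≪ s`, i.e. either both `s`
and `t` are empty, or both are nonempty, `t` is at least as long as `s`, the
last entry of `s` is `r`-related to the last entry of `t`, and `s` is
`Forall₂ r`-related (`⊴`) to some subsequence `t'` of `t`. -/
def Ll {A : Type*} (r : A → A → Prop) (t s : List A) : Prop :=
  (s = [] ∧ t = []) ∨
    (s ≠ [] ∧ t ≠ [] ∧ s.length ≤ t.length ∧
      (∀ a ∈ s.getLast?, ∀ b ∈ t.getLast?, r a b) ∧
      ∃ t' : List A, t'.Sublist t ∧ List.Forall₂ r s t')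

open Filter Set

section

variable {α β : Type*} {r s : α → α → Prop}

theorem exists_strictMono_forall_lt_of_eventually_eventually {l : Filter ℕ} [l.NeBot]
    (hl : l ≤ atTop) {P : ℕ → ℕ → Prop} (h : ∀ᶠ m in l, ∀ᶠ n in l, P m n) :
    ∃ g : ℕ → ℕ, StrictMono g ∧ ∀ i j, i < j → P (g i) (g j) := by
  have hpick (S : {S : Set ℕ // S ∈ l}) : ∃ m ∈ S.1, ∀ᶠ n in l, P m n :=
    ((eventually_mem_set.2 S.2).and h).exists
  choose pick hpick_mem hpick_good using hpick
  let next (S : {S : Set ℕ // S ∈ l}) : {S : Set ℕ // S ∈ l} :=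
    ⟨S.1 ∩ {n | P (pick S) n} ∩ Ioi (pick S),
      inter_mem (inter_mem S.2 (hpick_good S)) (hl (Ioi_mem_atTop _))⟩
  let S (k : ℕ) : {S : Set ℕ // S ∈ l} := next^[k] ⟨univ, univ_mem⟩
  have hS_succ (k : ℕ) : S (k + 1) = next (S k) := Function.iterate_succ_apply' ..
  have hS_anti : Antitone fun k => (S k).1 :=
    antitone_nat_of_succ_le fun k => by rw [hS_succ]; exact fun n hn => hn.1.1
  have key (i j : ℕ) (hij : i < j) : P (pick (S i)) (pick (S j)) ∧ pick (S i) < pick (S j) := by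
    have hmem : pick (S j) ∈ (S (i + 1)).1 := hS_anti hij (hpick_mem _)
    rw [hS_succ] at hmem
    exact ⟨hmem.1.2, hmem.2⟩
  exact ⟨fun k => pick (S k), fun i j hij => (key i j hij).2, fun i j hij => (key i j hij).1⟩

/-- Ramsey's theorem for pairs, with two colours. -/
theorem exists_strictMono_forall_lt_or_forall_lt_not (P : ℕ → ℕ → Prop) :
    ∃ g : ℕ → ℕ, StrictMono g ∧
      ((∀ i j, i < j → P (g i) (g j)) ∨ ∀ i j, i < j → ¬P (g i) (g j)) := by
  let U : Ultrafilter ℕ := hyperfilter ℕ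
  have hU : (U : Filter ℕ) ≤ atTop := Nat.cofinite_eq_atTop ▸ hyperfilter_le_cofinite
  by_cases h : ∀ᶠ m in U, ∀ᶠ n in U, P m n
  · obtain ⟨g, hg, hP⟩ := exists_strictMono_forall_lt_of_eventually_eventually hU h
    exact ⟨g, hg, .inl hP⟩
  · simp_rw [← Ultrafilter.eventually_not] at h
    obtain ⟨g, hg, hP⟩ := exists_strictMono_forall_lt_of_eventually_eventually hU h
    exact ⟨g, hg, .inr hP⟩

namespace IsWqo

theorem mono (hr : IsWqo r) (h : ∀ a b, r a b → s a b) : IsWqo s := fun f => by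
  obtain ⟨g, hg, hchain⟩ := hr f
  exact ⟨g, hg, fun i j hij => h _ _ (hchain i j hij)⟩

theorem comap (hr : IsWqo r) (φ : β → α) : IsWqo fun a b => r (φ a) (φ b) :=
  fun f => hr (φ ∘ f)

theorem inf (hr : IsWqo r) (hs : IsWqo s) : IsWqo fun a b => r a b ∧ s a b := fun f => by
  obtain ⟨g, hg, hrg⟩ := hr f
  obtain ⟨g', hg', hsg⟩ := hs (f ∘ g)
  exact ⟨g ∘ g', hg.comp hg', fun i j hij => ⟨hrg _ _ (hg' hij), hsg i j hij⟩⟩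

theorem exists_of_frequently {p : α → Prop} (hp : IsWqo fun a b : Subtype p => r a b)
    {f : ℕ → α} (hf : ∃ᶠ n in atTop, p (f n)) :
    ∃ g : ℕ → ℕ, StrictMono g ∧ ∀ i j, i < j → r (f (g i)) (f (g j)) := by
  obtain ⟨φ, hφ, hpφ⟩ := extraction_of_frequently_atTop hf
  obtain ⟨g, hg, hchain⟩ := hp fun n => ⟨f (φ n), hpφ n⟩
  exact ⟨φ ∘ g, hφ.comp hg, hchain⟩

theorem of_subtype_of_subtype_not (p : α → Prop) (hp : IsWqo fun a b : Subtype p => r a b)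
    (hnp : IsWqo fun a b : {a // ¬p a} => r a b) : IsWqo r := fun f => by
  by_cases hf : ∃ᶠ n in atTop, p (f n)
  · exact hp.exists_of_frequently hf
  · exact hnp.exists_of_frequently (not_frequently.1 hf).frequently

theorem of_wellQuasiOrdered (hr : WellQuasiOrdered r) : IsWqo r := fun f => by
  obtain ⟨g, hg, hchain | hanti⟩ := exists_strictMono_forall_lt_or_forall_lt_not
    fun m n => r (f m) (f n)
  · exact ⟨g, hg, hchain⟩
  · obtain ⟨i, j, hij, hr⟩ := hr (f ∘ g)
    exact (hanti i j hij hr).elim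

end IsWqo

open Set.PartiallyWellOrderedOn in
/-- The step of the minimal bad sequence argument: the new sequence is shorter than `f` at
position `g 0`, and it is still bad because the heads of the `f (g k)` form an `r`-chain. -/
theorem isBadSeq_tails {f : ℕ → List α} (hbad : IsBadSeq (List.SublistForall₂ r) univ f)
    (hne : ∀ n, f n ≠ []) {g : ℕ → ℕ} (hg : StrictMono g)
    (hhead : ∀ i j, i < j → r ((f (g i)).head (hne _)) ((f (g j)).head (hne _))) :
    IsBadSeq (List.SublistForall₂ r) univ
      fun n => if n < g 0 then f n else (f (g (n - g 0))).tail := by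
  have hcons (n : ℕ) : (f n).head (hne n) :: (f n).tail = f n := List.cons_head_tail (hne n)
  refine ⟨fun _ => mem_univ _, fun m n hmn hsub => ?_⟩
  beta_reduce at hsub
  by_cases hn : n < g 0
  · rw [if_pos hn, if_pos (hmn.trans hn)] at hsub
    exact hbad.2 m n hmn hsub
  rw [if_neg hn] at hsub
  by_cases hm : m < g 0
  · rw [if_pos hm] at hsub
    have hm' : m < g (n - g 0) := hm.trans_le (hg.monotone (Nat.zero_le _))
    have hsub' := hsub.cons_right (a := (f (g (n - g 0))).head (hne _))
    rw [hcons] at hsub'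
    exact hbad.2 _ _ hm' hsub'
  · rw [if_neg hm] at hsub
    have hlt : m - g 0 < n - g 0 := by omega
    have hsub' := hsub.cons (hhead _ _ hlt)
    rw [hcons, hcons] at hsub'
    exact hbad.2 _ _ (hg hlt) hsub'

open Set.PartiallyWellOrderedOn in
theorem IsWqo.wellQuasiOrdered_sublistForall₂ (hr : IsWqo r) :
    WellQuasiOrdered (List.SublistForall₂ r) := by
  rw [← partiallyWellOrderedOn_univ_iff, iff_not_exists_isMinBadSeq List.length]
  rintro ⟨f, hbad, hmin⟩
  have hne (n : ℕ) : f n ≠ [] := fun hn => hbad.2 n (n + 1) n.lt_succ_self (hn ▸ .nil)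
  obtain ⟨g, hg, hhead⟩ := hr fun n => (f n).head (hne n)
  refine hmin (g 0) _ (fun m hm => (if_pos hm).symm) ?_ (isBadSeq_tails hbad hne hg hhead)
  simpa using List.length_pos_iff.2 (hne (g 0))

end

/-- Higman-type theorem: if `r` is a wqo on `A` then `≪` is a wqo on `A*`
(the wqo chains going from the embedded list to the embedding one). -/
theorem ll_isWqo {A : Type*} (r : A → A → Prop) (h : IsWqo r) :
    IsWqo (fun s t : List A => Ll r t s) := by
  refine IsWqo.of_subtype_of_subtype_not (fun l : List A => l = [])
    (fun f => ⟨id, strictMono_id, fun i j _ => .inl ⟨(f i).2, (f j).2⟩⟩) ?_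
  have hlen := (IsWqo.of_wellQuasiOrdered wellQuasiOrdered_le).comap
    fun l : {l : List A // l ≠ []} => l.1.length
  have hlast := h.comap fun l : {l : List A // l ≠ []} => l.1.getLast l.2
  have hsub := (IsWqo.of_wellQuasiOrdered h.wellQuasiOrdered_sublistForall₂).comap
    fun l : {l : List A // l ≠ []} => l.1
  refine ((hlen.inf hlast).inf hsub).mono ?_
  rintro ⟨s, hs⟩ ⟨t, ht⟩ ⟨⟨hst, hst_last⟩, hst_sub⟩
  obtain ⟨t', hst', ht'⟩ := List.sublistForall₂_iff.1 hst_sub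
  refine .inr ⟨hs, ht, hst, ?_, t', ht', hst'⟩
  simpa [List.getLast?_eq_some_getLast hs, List.getLast?_eq_some_getLast ht] using hst_last
end

section
/- Every infinite backward irreducible sequence of finite frames has an infinite irreducible subsequence. -/
/-- A Kripke frame: a set of worlds with a binary relation. -/
structure Frame where
  World : Type
  rel : World → World → Prop

/-- `f` is a reduction (surjective p-morphism) of `F` to `G`. -/
def Reduction (F G : Frame) (f : F.World → G.World) : Prop :=
  Function.Surjective f ∧
  (∀ w u, F.rel w u → G.rel (f w) (f u)) ∧
  (∀ w v, G.rel (f w) v → ∃ u, F.rel w u ∧ f u = v)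

/-- `F` is reducible to `G`. -/
def Reducible (F G : Frame) : Prop := ∃ f, Reduction F G f

/-- The subframe of `F` generated by the point `w`. -/
def Frame.genSub (F : Frame) (w : F.World) : Frame :=
  ⟨{v // Relation.ReflTransGen F.rel w v}, fun a b => F.rel a.1 b.1⟩

/-- A sequence of frames is backward irreducible if for all `i < j`, no
point-generated subframe of `F j` is reducible to `F i`. -/
def BackwardIrreducible (F : ℕ → Frame) : Prop :=
  ∀ i j : ℕ, i < j → ∀ w : (F j).World, ¬ Reducible ((F j).genSub w) (F i)

/-- A sequence of frames is irreducible if for all `i ≠ j`, no point-generated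
subframe of `F j` is reducible to `F i`. -/
def IrreducibleSeq (F : ℕ → Frame) : Prop :=
  ∀ i j : ℕ, i ≠ j → ∀ w : (F j).World, ¬ Reducible ((F j).genSub w) (F i)

/-!
Pass to a subsequence along which the sizes of the finite frames are non-decreasing; it then
suffices to rule out a reduction of a point-generated subframe of an earlier frame `A` onto a
later frame `B` with `|A| ≤ |B|`. Counting points, such a reduction is a bijection defined on
all of `A`, hence an isomorphism `A ≅ B`. So `B` is generated by the image of the root, and the
inverse isomorphism reduces this generated subframe of `B` onto the earlier frame `A`,
contradicting backward irreducibility.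
-/

open Function

namespace Frame

def IsRoot (F : Frame) (r : F.World) : Prop :=
  ∀ v, Relation.ReflTransGen F.rel r v

theorem isRoot_genSub (F : Frame) (w : F.World) : (F.genSub w).IsRoot ⟨w, .refl⟩ := by
  rintro ⟨v, hv⟩
  induction hv with
  | refl => exact .refl
  | tail _ h ih => exact ih.tail h

theorem reduction_genSub_val {F : Frame} {r : F.World} (hr : F.IsRoot r) :
    Reduction (F.genSub r) F Subtype.val :=
  ⟨fun v => ⟨⟨v, hr v⟩, rfl⟩, fun _ _ h => h, fun w v h => ⟨⟨v, w.2.tail h⟩, h, rfl⟩⟩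

end Frame

namespace Reduction

variable {F G H : Frame}

theorem comp {f : F.World → G.World} {g : G.World → H.World} (hg : Reduction G H g)
    (hf : Reduction F G f) : Reduction F H (g ∘ f) := by
  obtain ⟨hfs, hff, hfb⟩ := hf
  obtain ⟨hgs, hgf, hgb⟩ := hg
  refine ⟨hgs.comp hfs, fun w u h => hgf _ _ (hff _ _ h), fun w v h => ?_⟩
  obtain ⟨u', hu', rfl⟩ := hgb _ _ h
  obtain ⟨u, hu, rfl⟩ := hfb _ _ hu'
  exact ⟨u, hu, rfl⟩

theorem symm {e : F.World ≃ G.World} (he : Reduction F G e) : Reduction G F e.symm := by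
  refine ⟨e.symm.surjective, fun x y hxy => ?_, fun x v h => ⟨e v, ?_, e.symm_apply_apply v⟩⟩
  · obtain ⟨u, hu, rfl⟩ := he.2.2 (e.symm x) y (by rwa [e.apply_symm_apply])
    rwa [e.symm_apply_apply]
  · simpa using he.2.1 _ _ h

theorem isRoot_map {f : F.World → G.World} (hf : Reduction F G f) {r : F.World}
    (hr : F.IsRoot r) : G.IsRoot (f r) := by
  intro v
  obtain ⟨u, rfl⟩ := hf.1 v
  exact (hr u).lift f hf.2.1

theorem isRoot_and_bijective_of_card_le {A B : Frame} [Finite A.World] {w : A.World}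
    {f : (A.genSub w).World → B.World} (hf : Reduction (A.genSub w) B f)
    (hcard : Nat.card A.World ≤ Nat.card B.World) : A.IsRoot w ∧ Bijective f := by
  have : Finite (A.genSub w).World := Subtype.finite
  have hsub : Nat.card (A.genSub w).World ≤ Nat.card A.World :=
    Nat.card_le_card_of_injective _ Subtype.val_injective
  have hquot : Nat.card B.World ≤ Nat.card (A.genSub w).World :=
    Nat.card_le_card_of_surjective f hf.1
  have hval : Bijective (Subtype.val : (A.genSub w).World → A.World) :=
    (Nat.bijective_iff_injective_and_card _).2
      ⟨Subtype.val_injective, hsub.antisymm (hcard.trans hquot)⟩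
  refine ⟨fun v => ?_, (Nat.bijective_iff_surjective_and_card f).2
    ⟨hf.1, (hsub.trans hcard).antisymm hquot⟩⟩
  obtain ⟨⟨u, hu⟩, rfl⟩ := hval.2 v
  exact hu

end Reduction

theorem exists_reducible_genSub_of_card_le {A B : Frame} [Finite A.World] {w : A.World}
    (hred : Reducible (A.genSub w) B) (hcard : Nat.card A.World ≤ Nat.card B.World) :
    ∃ v, Reducible (B.genSub v) A := by
  obtain ⟨f, hf⟩ := hred
  obtain ⟨hw, hbij⟩ := hf.isRoot_and_bijective_of_card_le hcard
  have hroot : B.IsRoot (f ⟨w, .refl⟩) := hf.isRoot_map (A.isRoot_genSub w)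
  have hinv := Reduction.symm (e := Equiv.ofBijective f hbij) hf
  exact ⟨_, _, (Frame.reduction_genSub_val hw).comp
    (hinv.comp (Frame.reduction_genSub_val hroot))⟩

/-- Every infinite backward irreducible sequence of finite frames has an
infinite irreducible subsequence. -/
theorem backwardIrreducible_has_irreducible_subsequence (F : ℕ → Frame)
    (hfin : ∀ i, Finite (F i).World) (h : BackwardIrreducible F) :
    ∃ g : ℕ → ℕ, StrictMono g ∧ IrreducibleSeq (fun i => F (g i)) := by
  obtain ⟨g, hg⟩ := wellQuasiOrdered_le.exists_monotone_subseq fun i => Nat.card (F i).World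
  refine ⟨g, g.strictMono, fun i j hij w hred => ?_⟩
  rcases hij.lt_or_gt with hlt | hgt
  · exact h _ _ (g.strictMono hlt) w hred
  · have := hfin (g j)
    obtain ⟨v, hv⟩ := exists_reducible_genSub_of_card_le hred (hg _ _ hgt.le)
    exact h _ _ (g.strictMono hgt) v hv
end

section
/- Let f be a reduction of transitive frame F to transitive frame G, and let w be a point of F. Then (1) w is a dead-end (has no successor) in F iff f(w) is a dead-end in G; (2) for each n ≥ 1, if f(w) has rank n in G, then w has rank at least n in F. -/
/-- There is a chain of `n` points starting at `u`, each a proper successor of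
the previous one (`R x y` and not `R y x`). -/
def ChainFrom {W : Type*} (R : W → W → Prop) (u : W) (n : ℕ) : Prop :=
  ∃ c : ℕ → W, c 0 = u ∧ ∀ i : ℕ, i + 1 < n → (R (c i) (c (i + 1)) ∧ ¬ R (c (i + 1)) (c i))

/-- `u` is of rank greater than `k`. -/
def RankGT {W : Type*} (R : W → W → Prop) (u : W) (k : ℕ) : Prop :=
  ∃ n : ℕ, k < n ∧ ChainFrom R u n

/-- `u` is of rank (exactly) `k`. -/
def RankEq {W : Type*} (R : W → W → Prop) (u : W) (k : ℕ) : Prop :=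
  ChainFrom R u k ∧ ¬ RankGT R u k

/-- If `f` reduces the transitive frame `F` to the transitive frame `G` then
(1) `w` is a dead-end iff `f w` is, and (2) if `f w` has rank `n ≥ 1`, then `w`
has rank at least `n`. -/
theorem reduction_rank (F G : Frame)
    (hF : ∀ a b c, F.rel a b → F.rel b c → F.rel a c)
    (hG : ∀ a b c, G.rel a b → G.rel b c → G.rel a c)
    (f : F.World → G.World) (hf : Reduction F G f) (w : F.World) :
    ((∀ u, ¬ F.rel w u) ↔ (∀ v, ¬ G.rel (f w) v)) ∧
    (∀ n : ℕ, 1 ≤ n → RankEq G.rel (f w) n → ChainFrom F.rel w n) := by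
  obtain ⟨hsurj, hfwd, hback⟩ := hf
  constructor
  · constructor
    · intro h v hv
      obtain ⟨u, hu, -⟩ := hback w v hv
      exact h u hu
    · intro h u hu
      exact h (f u) (hfwd w u hu)
  · intro n _ hRE
    obtain ⟨⟨c, hc0, hchain⟩, -⟩ := hRE
    classical
    let d : ℕ → F.World := fun i => Nat.rec w
      (fun i di => if h : G.rel (f di) (c (i + 1)) then (hback di _ h).choose else di) i
    have hd0 : d 0 = w := rfl
    have hstep : ∀ i, d (i + 1) =
        if h : G.rel (f (d i)) (c (i + 1)) then (hback (d i) _ h).choose else d i :=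
      fun i => rfl
    have key : ∀ i, i < n → f (d i) = c i ∧ (i + 1 < n → F.rel (d i) (d (i + 1))) := by
      intro i
      induction i with
      | zero =>
        intro _
        refine ⟨hc0.symm, fun h1 => ?_⟩
        have hrel : G.rel (f (d 0)) (c 1) := by
          rw [hd0, ← hc0]; exact (hchain 0 h1).1
        rw [hstep 0, dif_pos hrel]
        exact (hback (d 0) _ hrel).choose_spec.1
      | succ i ih =>
        intro hi
        have hi' : i < n := Nat.lt_of_succ_lt hi
        obtain ⟨hfi, -⟩ := ih hi'
        have hrel : G.rel (f (d i)) (c (i + 1)) := by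
          rw [hfi]; exact (hchain i hi).1
        have hfd : f (d (i + 1)) = c (i + 1) := by
          rw [hstep i, dif_pos hrel]
          exact (hback (d i) _ hrel).choose_spec.2
        refine ⟨hfd, fun h1 => ?_⟩
        have hrel' : G.rel (f (d (i + 1))) (c (i + 1 + 1)) := by
          rw [hfd]; exact (hchain (i + 1) h1).1
        rw [hstep (i + 1), dif_pos hrel']
        exact (hback (d (i + 1)) _ hrel').choose_spec.1
    refine ⟨d, hd0, fun i h1 => ?_⟩
    have hi : i < n := Nat.lt_of_succ_lt h1
    refine ⟨(key i hi).2 h1, fun hcon => ?_⟩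
    have := hfwd _ _ hcon
    rw [(key i hi).1, (key (i + 1) h1).1] at this
    exact (hchain i h1).2 this
end

section
/- For each n ∈ ω, define the frame H_n = ⟨W_n, E_n⟩ where C_n = {k : k ≤ n+1}, B_n = {X ⊆ C_n : |X| = 2}, W_n = {a} ∪ B_n ∪ C_n, and E_n = {(a,u) : u ∈ B_n ∪ C_n} ∪ {(b,c) ∈ B_n × C_n : c ∈ b}. Then for all k < n, the frame H_n is not reducible to the frame H_k. -/
/-- The worlds of the frame `H n`: the root `a` (encoded `none`), the
two-element subsets of `C n = {0, …, n+1}` (the set `B n`), and the elements of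
`C n` itself. -/
def HWorld (n : ℕ) : Type := Option (({s : Finset (Fin (n + 2)) // s.card = 2}) ⊕ Fin (n + 2))

/-- The relation of the frame `H n`: the root sees everything else, and a
two-element set `b ∈ B n` sees exactly its two elements. -/
def Hrel (n : ℕ) : HWorld n → HWorld n → Prop := fun x y =>
  match x, y with
  | none, some _ => True
  | some (Sum.inl b), some (Sum.inr c) => c ∈ b.1
  | _, _ => False

/-- The frame `H n`. -/
def HFrame (n : ℕ) : Frame := ⟨HWorld n, Hrel n⟩

/-!
A reduction maps dead ends to dead ends, so it sends `C n` into `C k`. For distinct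
`c₁ c₂ ∈ C n`, the successors of the image of `{c₁, c₂} ∈ B n` are exactly the images of `c₁`
and `c₂`; since no point of `H k` has exactly one successor, these images differ. Hence the
reduction restricts to an injection `C n → C k`, and `n + 2 ≤ k + 2`.
-/

open Function

namespace Reduction

variable {F G : Frame} {f : F.World → G.World}

theorem rel_map_iff (hf : Reduction F G f) {w : F.World} {v : G.World} :
    G.rel (f w) v ↔ ∃ u, F.rel w u ∧ f u = v :=
  ⟨hf.2.2 w v, fun ⟨u, hu, hfu⟩ => hfu ▸ hf.2.1 w u hu⟩

theorem not_rel_map_of_forall_not_rel (hf : Reduction F G f) {w : F.World}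
    (hw : ∀ u, ¬ F.rel w u) (v : G.World) : ¬ G.rel (f w) v := by
  rw [hf.rel_map_iff]
  rintro ⟨u, hu, -⟩
  exact hw u hu

theorem rel_map_iff_eq_of_rel_iff_or (hf : Reduction F G f) {w u₁ u₂ : F.World}
    (hw : ∀ u, F.rel w u ↔ u = u₁ ∨ u = u₂) (h : f u₁ = f u₂) (v : G.World) :
    G.rel (f w) v ↔ v = f u₁ := by
  simp only [hf.rel_map_iff, hw, or_and_right, exists_or, exists_eq_left, ← h, or_self]
  exact eq_comm

end Reduction

section HFrame

variable {n : ℕ}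

theorem not_Hrel_inr (c : Fin (n + 2)) (u : HWorld n) : ¬ Hrel n (some (.inr c)) u := by
  rcases u with _ | _ | _ <;> exact id

theorem Hrel_inl_iff (b : {s : Finset (Fin (n + 2)) // s.card = 2}) (v : HWorld n) :
    Hrel n (some (.inl b)) v ↔ ∃ c ∈ b.1, v = some (.inr c) := by
  rcases v with _ | _ | c
  · exact ⟨False.elim, fun ⟨_, _, h⟩ => by cases h⟩
  · exact ⟨False.elim, fun ⟨_, _, h⟩ => by cases h⟩
  · exact ⟨fun h => ⟨c, h, rfl⟩, fun ⟨_, h, he⟩ => by cases he; exact h⟩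

theorem Hrel_inl_pair_iff {c₁ c₂ : Fin (n + 2)} (hne : c₁ ≠ c₂) (u : HWorld n) :
    Hrel n (some (.inl ⟨{c₁, c₂}, Finset.card_pair hne⟩)) u ↔
      u = some (.inr c₁) ∨ u = some (.inr c₂) := by
  simp only [Hrel_inl_iff, Finset.mem_insert, Finset.mem_singleton, or_and_right, exists_or,
    exists_eq_left]

theorem exists_eq_inr_of_forall_not_Hrel {x : HWorld n} (hx : ∀ v, ¬ Hrel n x v) :
    ∃ c, x = some (.inr c) := by
  rcases x with _ | b | c
  · exact (hx (some (.inr 0)) trivial).elim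
  · obtain ⟨c, hc⟩ := Finset.card_pos.mp (b.2 ▸ two_pos)
    exact (hx _ ((Hrel_inl_iff b _).2 ⟨c, hc, rfl⟩)).elim
  · exact ⟨c, rfl⟩

theorem not_forall_Hrel_iff_eq (x y : HWorld n) : ¬ ∀ v, Hrel n x v ↔ v = y := by
  intro hxy
  have hsucc : ∀ v w, Hrel n x v → Hrel n x w → v = w := fun v w hv hw =>
    ((hxy v).1 hv).trans ((hxy w).1 hw).symm
  rcases x with _ | b | c
  · cases hsucc (some (.inr 0)) (some (.inr 1)) trivial trivial
  · obtain ⟨s, hs⟩ := b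
    obtain ⟨c₁, c₂, hne, rfl⟩ := Finset.card_eq_two.mp hs
    cases hsucc _ _ ((Hrel_inl_pair_iff hne _).2 (.inl rfl))
      ((Hrel_inl_pair_iff hne _).2 (.inr rfl))
    exact hne rfl
  · exact not_Hrel_inr c y ((hxy y).2 rfl)

end HFrame

/-- For `k < n`, the frame `H n` is not reducible to the frame `H k`. -/
theorem hframe_not_reducible : ∀ n k : ℕ, k < n → ¬ Reducible (HFrame n) (HFrame k) := by
  rintro n k hk ⟨f, hf⟩
  have hC : ∀ c, ∃ c', f (some (.inr c)) = some (.inr c') := fun c =>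
    exists_eq_inr_of_forall_not_Hrel (hf.not_rel_map_of_forall_not_rel (not_Hrel_inr c))
  choose g hg using hC
  have hg_inj : Injective g := by
    intro c₁ c₂ hgc
    by_contra hne
    refine not_forall_Hrel_iff_eq _ _ (hf.rel_map_iff_eq_of_rel_iff_or (Hrel_inl_pair_iff hne) ?_)
    rw [hg, hg, hgc]
  have hle := Fin.le_of_injective g hg_inj
  omega
end
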